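/- Let φ : P₁·A* → P₂·A* be an isomorphism of essential right ideals of A*, where P₁ and P₂ are finite maximal prefix codes. Then φ admits a strict extension if and only if there exist x₀, y₀ ∈ A* such that for every letter α ∈ A: x₀α ∈ P₁, y₀α ∈ P₂, and φ(x₀α) = y₀α. -/

import Mathlib

/-!
If `Φ` strictly extends `φ`, its domain contains words outside `P₁A*`. Since `P₁` is a finite
maximal prefix code, every such word is a prefix of a word of `P₁`, so there are only finitely
many; a longest one `x₀` in the domain has all its one-letter extensions `x₀α` in `P₁`, and
`y₀ = Φ x₀` lies outside `P₂A*` because `Φ` is injective and `φ` is onto `P₂A*`.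

Conversely, `P₁A* ∪ {x₀}` and `P₂A* ∪ {y₀}` are right ideals, and sending `x₀` to `y₀` extends `φ`
to an isomorphism between them: `φ (x₀ α t) = y₀ α t` is exactly the required compatibility.
-/

variable {A : Type*}

/-- `R` is a right ideal of the free monoid `A*`: closed under right concatenation. -/
def IsRightIdeal (R : Set (List A)) : Prop :=
  ∀ r ∈ R, ∀ x : List A, r ++ x ∈ R

/-- A prefix code: no element is a strict prefix of another element. -/
def IsPrefixCode (P : Set (List A)) : Prop :=
  ∀ p ∈ P, ∀ q ∈ P, p <+: q → p = q

/-- The right ideal `P·A*` generated by `P`. -/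
def genIdeal (P : Set (List A)) : Set (List A) :=
  {w | ∃ p ∈ P, ∃ x : List A, w = p ++ x}

/-- A maximal prefix code: a prefix code not strictly contained in any other prefix code. -/
def IsMaximalPrefixCode (P : Set (List A)) : Prop :=
  IsPrefixCode P ∧ ∀ Q : Set (List A), IsPrefixCode Q → P ⊆ Q → P = Q

lemma mem_genIdeal_of_mem {P : Set (List A)} {p : List A} (h : p ∈ P) : p ∈ genIdeal P :=
  ⟨p, h, [], by simp⟩

lemma mem_genIdeal_of_prefix {P : Set (List A)} {u w : List A}
    (h : u ∈ genIdeal P) (hp : u <+: w) : w ∈ genIdeal P := by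
  obtain ⟨p, hpP, t, rfl⟩ := h
  obtain ⟨s, rfl⟩ := hp
  exact ⟨p, hpP, t ++ s, by simp⟩

lemma isRightIdeal_genIdeal (P : Set (List A)) : IsRightIdeal (genIdeal P) :=
  fun _ hr x => mem_genIdeal_of_prefix hr ⟨x, rfl⟩

lemma IsRightIdeal.insert {I : Set (List A)} {x : List A} (hI : IsRightIdeal I)
    (hx : ∀ α, x ++ [α] ∈ I) : IsRightIdeal (insert x I) := by
  rintro r (rfl | hr) (_ | ⟨β, t⟩)
  · simp
  · exact Or.inr (by simpa using hI _ (hx β) t)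
  · exact Or.inr (by simpa using hr)
  · exact Or.inr (hI r hr _)

lemma append_singleton_mem_of_mem_genIdeal {P : Set (List A)} {x : List A} {α : A}
    (hx : x ∉ genIdeal P) (h : x ++ [α] ∈ genIdeal P) : x ++ [α] ∈ P := by
  obtain ⟨p, hp, t, ht⟩ := h
  rcases List.prefix_concat_iff.mp ⟨t, ht.symm⟩ with h | h
  · rwa [← h]
  · exact absurd (mem_genIdeal_of_prefix (mem_genIdeal_of_mem hp) h) hx

lemma IsPrefixCode.notMem_genIdeal_of_append_singleton_mem {P : Set (List A)}
    (hP : IsPrefixCode P) {x : List A} {α : A} (h : x ++ [α] ∈ P) : x ∉ genIdeal P := by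
  rintro ⟨p, hp, t, rfl⟩
  have := congrArg List.length (hP p hp _ h ⟨t ++ [α], by simp⟩)
  simp at this

namespace IsMaximalPrefixCode

variable {P : Set (List A)}

lemma exists_prefix_of_notMem_genIdeal (hP : IsMaximalPrefixCode P) {w : List A}
    (hw : w ∉ genIdeal P) : ∃ p ∈ P, w <+: p := by
  by_contra! hcon
  have hcode : IsPrefixCode (insert w P) := by
    rintro p (rfl | hp) q (rfl | hq) hpq
    · rfl
    · exact absurd hpq (hcon q hq)
    · exact absurd (mem_genIdeal_of_prefix (mem_genIdeal_of_mem hp) hpq) hw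
    · exact hP.1 p hp q hq hpq
  have hwP : w ∈ P := (hP.2 _ hcode (Set.subset_insert w P)).symm ▸ Set.mem_insert w P
  exact hcon w hwP List.prefix_rfl

lemma finite_compl_genIdeal (hP : IsMaximalPrefixCode P) (hfin : P.Finite) :
    (genIdeal P)ᶜ.Finite := by
  refine (hfin.biUnion fun p _ => p.inits.finite_toSet).subset fun w hw => ?_
  obtain ⟨p, hp, hwp⟩ := hP.exists_prefix_of_notMem_genIdeal hw
  exact Set.mem_biUnion hp ((List.mem_inits w p).2 hwp)

lemma exists_append_singleton_mem_of_ssubset (hP : IsMaximalPrefixCode P) (hfin : P.Finite)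
    {J : Set (List A)} (hJ : IsRightIdeal J) (hPJ : genIdeal P ⊂ J) :
    ∃ x ∈ J, x ∉ genIdeal P ∧ ∀ α, x ++ [α] ∈ P := by
  have hS : (J \ genIdeal P).Finite :=
    (hP.finite_compl_genIdeal hfin).subset fun _ hw => hw.2
  obtain ⟨x, ⟨hxJ, hxP⟩, hmax⟩ :=
    hS.exists_maximalFor List.length _ (Set.nonempty_of_ssubset hPJ)
  refine ⟨x, hxJ, hxP, fun α => append_singleton_mem_of_mem_genIdeal hxP ?_⟩
  by_contra hxα
  have := hmax ⟨hJ x hxJ [α], hxα⟩ (by simp)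
  simp at this

end IsMaximalPrefixCode

lemma Set.InjOn.apply_notMem_of_surjOn {α β : Type*} {Φ φ : α → β} {s J : Set α} {t : Set β}
    (hΦ : Set.InjOn Φ J) (hsJ : s ⊆ J) (hφ : Set.SurjOn φ s t) (heq : Set.EqOn Φ φ s)
    {x : α} (hx : x ∈ J) (hxs : x ∉ s) : Φ x ∉ t := by
  rintro h
  obtain ⟨u, hu, hux⟩ := hφ h
  exact hxs (hΦ (hsJ hu) hx ((heq hu).trans hux) ▸ hu)

lemma update_append_of_mem_insert [DecidableEq A] {I : Set (List A)} {φ : List A → List A}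
    {x y : List A} (hI : IsRightIdeal I) (hx : x ∉ I) (hhom : ∀ u ∈ I, ∀ t, φ (u ++ t) = φ u ++ t)
    (hxy : ∀ α, x ++ [α] ∈ I ∧ φ (x ++ [α]) = y ++ [α]) :
    ∀ u ∈ insert x I, ∀ t,
      Function.update φ x y (u ++ t) = Function.update φ x y u ++ t := by
  rintro u (rfl | hu) (_ | ⟨β, t⟩)
  · simp
  · have hne : u ++ β :: t ≠ u := fun h => by simpa using congrArg List.length h
    rw [Function.update_of_ne hne, Function.update_self,
      show u ++ β :: t = (u ++ [β]) ++ t by simp, hhom _ (hxy β).1, (hxy β).2]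
    simp
  · simp
  · have hne : ∀ v ∈ I, v ≠ x := fun v hv => ne_of_mem_of_not_mem hv hx
    rw [Function.update_of_ne (hne _ (hI u hu _)), Function.update_of_ne (hne u hu), hhom u hu]

theorem strict_extension_iff_general [Fintype A] (hA : 2 ≤ Fintype.card A)
    (P₁ P₂ : Set (List A))
    (h₁ : IsMaximalPrefixCode P₁) (h₂ : IsMaximalPrefixCode P₂)
    (hfin₁ : P₁.Finite)
    (φ : List A → List A)
    (hbij : Set.BijOn φ (genIdeal P₁) (genIdeal P₂))
    (hhom : ∀ u ∈ genIdeal P₁, ∀ x : List A, φ (u ++ x) = φ u ++ x) :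
    (∃ (Φ : List A → List A) (J₁ J₂ : Set (List A)),
      IsRightIdeal J₁ ∧ IsRightIdeal J₂ ∧
      genIdeal P₁ ⊂ J₁ ∧ genIdeal P₂ ⊆ J₂ ∧
      Set.BijOn Φ J₁ J₂ ∧
      (∀ u ∈ J₁, ∀ x : List A, Φ (u ++ x) = Φ u ++ x) ∧
      (∀ w ∈ genIdeal P₁, Φ w = φ w)) ↔
    (∃ x₀ y₀ : List A, ∀ α : A,
      x₀ ++ [α] ∈ P₁ ∧ y₀ ++ [α] ∈ P₂ ∧ φ (x₀ ++ [α]) = y₀ ++ [α]) := by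
  constructor
  · rintro ⟨Φ, J₁, J₂, hJ₁, -, hsub₁, -, hΦ, hΦhom, hext⟩
    obtain ⟨x₀, hx₀J, hx₀, hx₀P⟩ := h₁.exists_append_singleton_mem_of_ssubset hfin₁ hJ₁ hsub₁
    have hy₀ : Φ x₀ ∉ genIdeal P₂ :=
      hΦ.injOn.apply_notMem_of_surjOn hsub₁.subset hbij.surjOn hext hx₀J hx₀
    refine ⟨x₀, Φ x₀, fun α => ?_⟩
    have hφ : φ (x₀ ++ [α]) = Φ x₀ ++ [α] := by
      rw [← hext _ (mem_genIdeal_of_mem (hx₀P α)), hΦhom x₀ hx₀J [α]]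
    have hmem : Φ x₀ ++ [α] ∈ genIdeal P₂ := hφ ▸ hbij.mapsTo (mem_genIdeal_of_mem (hx₀P α))
    exact ⟨hx₀P α, append_singleton_mem_of_mem_genIdeal hy₀ hmem, hφ⟩
  · classical
    rintro ⟨x₀, y₀, hxy⟩
    obtain ⟨α₀⟩ : Nonempty A := Fintype.card_pos_iff.mp (by omega)
    have hx₀ := h₁.1.notMem_genIdeal_of_append_singleton_mem (hxy α₀).1
    have hy₀ := h₂.1.notMem_genIdeal_of_append_singleton_mem (hxy α₀).2.1
    have hext : ∀ w ∈ genIdeal P₁, Function.update φ x₀ y₀ w = φ w :=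
      fun w hw => Function.update_of_ne (ne_of_mem_of_not_mem hw hx₀) _ _
    refine ⟨Function.update φ x₀ y₀, insert x₀ (genIdeal P₁), insert y₀ (genIdeal P₂),
      (isRightIdeal_genIdeal P₁).insert fun α => mem_genIdeal_of_mem (hxy α).1,
      (isRightIdeal_genIdeal P₂).insert fun α => mem_genIdeal_of_mem (hxy α).2.1,
      Set.ssubset_insert hx₀, Set.subset_insert _ _, ?_,
      update_append_of_mem_insert (isRightIdeal_genIdeal P₁) hx₀ hhom
        fun α => ⟨mem_genIdeal_of_mem (hxy α).1, (hxy α).2.2⟩, hext⟩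
    simpa using (hbij.congr fun w hw => (hext w hw).symm).insert
      (a := x₀) (by simpa using hy₀)

/-- extendability criterion for isomorphisms between finitely generated
essential right ideals: φ has a strict extension iff there are x₀, y₀ with
x₀α ∈ P₁, y₀α ∈ P₂ and φ(x₀α) = y₀α for every letter α. -/
theorem strict_extension_iff [Fintype A] (hA : 2 ≤ Fintype.card A)
    (P₁ P₂ : Set (List A))
    (h₁ : IsMaximalPrefixCode P₁) (h₂ : IsMaximalPrefixCode P₂)
    (hfin₁ : P₁.Finite) (hfin₂ : P₂.Finite)
    (φ : List A → List A)
    (hbij : Set.BijOn φ (genIdeal P₁) (genIdeal P₂))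
    (hhom : ∀ u ∈ genIdeal P₁, ∀ x : List A, φ (u ++ x) = φ u ++ x) :
    (∃ (Φ : List A → List A) (J₁ J₂ : Set (List A)),
      IsRightIdeal J₁ ∧ IsRightIdeal J₂ ∧
      genIdeal P₁ ⊂ J₁ ∧ genIdeal P₂ ⊆ J₂ ∧
      Set.BijOn Φ J₁ J₂ ∧
      (∀ u ∈ J₁, ∀ x : List A, Φ (u ++ x) = Φ u ++ x) ∧
      (∀ w ∈ genIdeal P₁, Φ w = φ w)) ↔
    (∃ x₀ y₀ : List A, ∀ α : A,
      x₀ ++ [α] ∈ P₁ ∧ y₀ ++ [α] ∈ P₂ ∧ φ (x₀ ++ [α]) = y₀ ++ [α]) :=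
  strict_extension_iff_general hA P₁ P₂ h₁ h₂ hfin₁ φ hbij hhom
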